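/- Let H be a (possibly infinite) graph and T ⊆ V(H) such that H is inner Eulerian with respect to T (i.e. there is no X ⊆ V(H)∖T with d_H(X) an odd natural number). Then for every t ∈ T with d(t) ≤ 1 there is a system of pairwise edge-disjoint T-paths covering all the edges incident with t. -/
import Mathlib


/-!
Common definitions: multigraphs (parallel edges allowed, no loops), walks,
paths, cuts, waves and related notions used in the statements below.
-/

universe u v

/-- A multigraph with vertex type `V` and edge type `E`: every edge is assigned
an unordered pair of *distinct* end-vertices (parallel edges allowed, no loops). -/
structure Multigraph (V : Type u) (E : Type v) : Type (max u v) where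
  inc : E → Sym2 V
  not_isDiag : ∀ e, ¬ (inc e).IsDiag

namespace Multigraph

variable {V : Type u} {E : Type v}

/-- Walks in a multigraph, recorded together with the edges they traverse. -/
inductive Walk (G : Multigraph V E) : V → V → Type (max u v)
  | nil (v : V) : Walk G v v
  | cons {u v w : V} (e : E) (he : G.inc e = s(u, v)) (p : Walk G v w) : Walk G u w

namespace Walk

variable {G : Multigraph V E}

/-- The list of vertices visited by a walk. -/
def support : ∀ {u w : V}, G.Walk u w → List V
  | _, _, .nil v => [v]
  | u, _, .cons _ _ p => u :: p.support

/-- The list of edges traversed by a walk. -/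
def edges : ∀ {u w : V}, G.Walk u w → List E
  | _, _, .nil _ => []
  | _, _, .cons e _ p => e :: p.edges

end Walk

/-- `δ_G(v)`: the set of edges incident with the vertex `v`. -/
def inci (G : Multigraph V E) (v : V) : Set E := {e | v ∈ G.inc e}

/-- `δ_G(X)`: the set of edges with exactly one end-vertex in `X`. -/
def cut (G : Multigraph V E) (X : Set V) : Set E :=
  {e | ∃ x y, G.inc e = s(x, y) ∧ x ∈ X ∧ y ∉ X}

/-- Connectedness of a multigraph. -/
def Connected (G : Multigraph V E) : Prop := ∀ u v : V, Nonempty (G.Walk u v)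

/-- A `T`-path: a path connecting two distinct vertices of `T`
with no internal vertex in `T`. -/
structure TPath (G : Multigraph V E) (T : Set V) : Type (max u v) where
  first : V
  last : V
  walk : G.Walk first last
  first_mem : first ∈ T
  last_mem : last ∈ T
  ne : first ≠ last
  support_nodup : walk.support.Nodup
  internal : ∀ x ∈ walk.support, x ∈ T → x = first ∨ x = last

/-- A system of pairwise edge-disjoint `T`-paths. -/
def TPathDisjoint (G : Multigraph V E) {T : Set V} (P : Set (G.TPath T)) : Prop :=
  ∀ p ∈ P, ∀ q ∈ P, p ≠ q → ∀ e, e ∈ p.walk.edges → e ∉ q.walk.edges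

/-- An `st`-path: a path from `s` to `t` (no internal vertex is `s` or `t`,
which is automatic as the vertices of a path are distinct). -/
structure STPath (G : Multigraph V E) (s t : V) : Type (max u v) where
  walk : G.Walk s t
  support_nodup : walk.support.Nodup

/-- A system of pairwise edge-disjoint `st`-paths. -/
def STPathDisjoint (G : Multigraph V E) {s t : V} (P : Set (G.STPath s t)) : Prop :=
  ∀ p ∈ P, ∀ q ∈ P, p ≠ q → ∀ e, e ∈ p.walk.edges → e ∉ q.walk.edges

/-- A nontrivial path starting at `s`. -/
structure SPath (G : Multigraph V E) (s : V) : Type (max u v) where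
  last : V
  walk : G.Walk s last
  support_nodup : walk.support.Nodup
  edges_ne_nil : walk.edges ≠ []

/-- A system of pairwise edge-disjoint paths starting at `s`. -/
def SPathDisjoint (G : Multigraph V E) {s : V} (W : Set (G.SPath s)) : Prop :=
  ∀ p ∈ W, ∀ q ∈ W, p ≠ q → ∀ e, e ∈ p.walk.edges → e ∉ q.walk.edges

/-- The set of last edges of a system of paths starting at `s`. -/
def lastEdges (G : Multigraph V E) {s : V} (W : Set (G.SPath s)) : Set E :=
  {e | ∃ p ∈ W, p.walk.edges.getLast? = some e}

/-- `C` is a cut separating `A` from `B`. -/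
def SepCut (G : Multigraph V E) (A B : Set V) (C : Set E) : Prop :=
  ∃ X : Set V, A ⊆ X ∧ (∀ b ∈ B, b ∉ X) ∧ C = G.cut X

/-- `C` is a `⊆`-minimal cut separating `A` from `B`. -/
def IsMinSepCut (G : Multigraph V E) (A B : Set V) (C : Set E) : Prop :=
  G.SepCut A B C ∧ ∀ D : Set E, G.SepCut A B D → D ⊆ C → D = C

/-- An `s`-`B`-wave: a system of pairwise edge-disjoint paths starting at `s`
whose set of last edges is a `⊆`-minimal cut separating `s` from `B`. -/
def IsWave (G : Multigraph V E) (s : V) (B : Set V) (W : Set (G.SPath s)) : Prop :=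
  G.SPathDisjoint W ∧ G.IsMinSepCut {s} B (G.lastEdges W)

/-- An Erdős–Menger `st`-cut: an `st`-cut which is orthogonal to some system of
pairwise edge-disjoint `st`-paths, i.e. it consists of exactly one edge chosen
from each path of the system. -/
def IsEMCut (G : Multigraph V E) (s t : V) (C : Set E) : Prop :=
  (∃ X : Set V, s ∈ X ∧ t ∉ X ∧ C = G.cut X) ∧
  ∃ P : Set (G.STPath s t), G.STPathDisjoint P ∧
    (∀ p ∈ P, ∃! e, e ∈ C ∧ e ∈ p.walk.edges) ∧
    (∀ e ∈ C, ∃ p ∈ P, e ∈ p.walk.edges)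

/-- The order `≼` on `st`-cuts: the `s`-side of `C` is contained in the
`s`-side of `D` (in a connected graph the `s`-side is unique). -/
def CutLE (G : Multigraph V E) (s t : V) (C D : Set E) : Prop :=
  ∃ X Y : Set V, s ∈ X ∧ t ∉ X ∧ C = G.cut X ∧ s ∈ Y ∧ t ∉ Y ∧ D = G.cut Y ∧ X ⊆ Y

/-- A cut of the form `C_W` for some `st`-wave `W`. -/
def IsWaveCut (G : Multigraph V E) (s t : V) (C : Set E) : Prop :=
  ∃ W : Set (G.SPath s), G.IsWave s {t} W ∧ G.lastEdges W = C

/-- Deletion of a set of edges. -/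
def deleteEdges (G : Multigraph V E) (F : Set E) : Multigraph V {e : E // e ∉ F} where
  inc e := G.inc e.1
  not_isDiag e := G.not_isDiag e.1

open Classical in
/-- Contraction of the vertex set `X` to the vertex `s` (edges inside `X` are
deleted, edges leaving `X` are redirected to `s`). -/
noncomputable def contract (G : Multigraph V E) (X : Set V) (s : V) :
    Multigraph V {e : E // ¬ (Sym2.map (fun v => if v ∈ X then s else v) (G.inc e)).IsDiag} where
  inc e := Sym2.map (fun v => if v ∈ X then s else v) (G.inc e.1)
  not_isDiag e := e.2

/-- Reachability inside a set `S` of vertices. -/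
def ReachableIn (G : Multigraph V E) (S : Set V) (x y : V) : Prop :=
  ∃ p : G.Walk x y, ∀ z ∈ p.support, z ∈ S

/-- `Y` is (the vertex set of) a connected component of the subgraph of `G`
induced by `S`. -/
def IsComponentOf (G : Multigraph V E) (Y S : Set V) : Prop :=
  Y.Nonempty ∧ Y ⊆ S ∧ ∀ x ∈ Y, ∀ y ∈ S, (G.ReachableIn S x y ↔ y ∈ Y)

/-- A cycle in a multigraph (a closed walk with distinct edges whose
vertices are distinct except that the first one equals the last one). -/
structure Cycle (G : Multigraph V E) : Type (max u v) where
  base : V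
  walk : G.Walk base base
  edges_ne_nil : walk.edges ≠ []
  edges_nodup : walk.edges.Nodup
  support_tail_nodup : walk.support.tail.Nodup

/-- A graph is Eulerian if its edge set can be partitioned into
edge sets of cycles. -/
def IsEulerian (G : Multigraph V E) : Prop :=
  ∃ C : Set G.Cycle,
    (∀ c ∈ C, ∀ d ∈ C, c ≠ d → ∀ e, e ∈ c.walk.edges → e ∉ d.walk.edges) ∧
    ∀ e : E, ∃ c ∈ C, e ∈ c.walk.edges

/-- A `T`-partition: a family `{A t : t ∈ T}` of pairwise disjoint vertex sets
with `A t ∩ T = {t}`. -/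
def IsTPartition (T : Set V) (A : V → Set V) : Prop :=
  (∀ t ∈ T, A t ∩ T = {t}) ∧
  ∀ t₁ ∈ T, ∀ t₂ ∈ T, t₁ ≠ t₂ → Disjoint (A t₁) (A t₂)

end Multigraph

namespace Multigraph

variable {V : Type u} {E : Type v} {G : Multigraph V E}

/-- Concatenation of walks. -/
def Walk.append : ∀ {u v w : V}, G.Walk u v → G.Walk v w → G.Walk u w
  | _, _, _, .nil _, q => q
  | _, _, _, .cons e he p, q => .cons e he (p.append q)

lemma Walk.support_eq_cons : ∀ {u w : V} (p : G.Walk u w),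
    p.support = u :: p.support.tail
  | _, _, .nil v => rfl
  | _, _, .cons _ _ _ => rfl

lemma Walk.end_mem_support : ∀ {u w : V} (p : G.Walk u w), w ∈ p.support
  | _, _, .nil v => by simp [Walk.support]
  | _, _, .cons e he p => by
      simp [Walk.support]
      exact Or.inr p.end_mem_support

lemma Walk.support_append : ∀ {u v w : V} (p : G.Walk u v) (q : G.Walk v w),
    (p.append q).support = p.support ++ q.support.tail
  | _, _, _, .nil v, q => by
      simp [Walk.append, Walk.support]
      exact q.support_eq_cons
  | _, _, _, .cons e he p, q => by
      simp [Walk.append, Walk.support]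
      exact p.support_append q

/-- Truncating a walk at a vertex in its support. -/
lemma Walk.exists_suffix : ∀ {v w : V} (q : G.Walk v w) (u : V), u ∈ q.support →
    ∃ r : G.Walk u w, r.support.Sublist q.support
  | _, _, .nil v, u, hu => by
      simp [Walk.support] at hu
      subst hu
      exact ⟨.nil u, List.Sublist.refl _⟩
  | v, w, .cons e he q, u, hu => by
      simp [Walk.support] at hu
      rcases hu with rfl | hu
      · exact ⟨.cons e he q, List.Sublist.refl _⟩
      · obtain ⟨r, hr⟩ := q.exists_suffix u hu
        exact ⟨r, hr.trans (List.sublist_cons_self _ _)⟩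

/-- Every walk contains a path with the same ends. -/
lemma Walk.exists_nodup : ∀ {u w : V} (p : G.Walk u w),
    ∃ q : G.Walk u w, q.support.Nodup ∧ ∀ z ∈ q.support, z ∈ p.support
  | _, _, .nil v => ⟨.nil v, by simp [Walk.support], by simp⟩
  | u, w, .cons e he p => by
      obtain ⟨q, hq, hsub⟩ := p.exists_nodup
      by_cases hu : u ∈ q.support
      · obtain ⟨r, hr⟩ := q.exists_suffix u hu
        exact ⟨r, hr.nodup hq, fun z hz => by
          simp [Walk.support]
          exact Or.inr (hsub z (hr.mem hz))⟩
      · refine ⟨.cons e he q, ?_, ?_⟩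
        · simpa [Walk.support, hq] using hu
        · intro z hz
          simp [Walk.support] at hz ⊢
          rcases hz with rfl | hz
          · exact Or.inl rfl
          · exact Or.inr (hsub z hz)

end Multigraph

/-- If `H` is inner Eulerian w.r.t. `T`, then for every `t ∈ T` with
`d(t) ≤ 1` there is a system of pairwise edge-disjoint `T`-paths covering all
edges incident with `t`. -/
theorem leaf_linkable {V : Type u} {E : Type v} (H : Multigraph V E)
    (T : Set V)
    (hEul : ∀ X : Set V, X ⊆ Tᶜ → ¬ ((H.cut X).Finite ∧ Odd (H.cut X).ncard))
    (t : V) (ht : t ∈ T) (hd : (H.inci t).Subsingleton) :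
    ∃ P : Set (H.TPath T), H.TPathDisjoint P ∧
      ∀ e ∈ H.inci t, ∃ p ∈ P, e ∈ p.walk.edges := by
  classical
  by_cases hne : ∃ e, e ∈ H.inci t
  swap
  · refine ⟨∅, ?_, ?_⟩
    · intro p hp; simp at hp
    · intro e he; exact absurd ⟨e, he⟩ hne
  obtain ⟨e, he⟩ := hne
  -- e is incident with t, so inc e = s(t, v) for some v ≠ t
  obtain ⟨v, hv⟩ := Sym2.mem_iff_exists.1 he
  have htv : t ≠ v := by
    intro h
    exact H.not_isDiag e (by rw [hv, ← h]; exact Sym2.mk_isDiag_iff.2 rfl)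
  -- coverage reduces to a single path containing e
  have cover : ∀ (p : H.TPath T), e ∈ p.walk.edges →
      (H.TPathDisjoint {p} ∧ ∀ e' ∈ H.inci t, ∃ q ∈ ({p} : Set (H.TPath T)), e' ∈ q.walk.edges) := by
    intro p hp
    constructor
    · intro a ha b hb hab
      simp at ha hb
      exact absurd (ha.trans hb.symm) hab
    · intro e' he'
      have : e' = e := hd he' he
      exact ⟨p, rfl, this ▸ hp⟩
  by_cases hvT : v ∈ T
  · -- single-edge T-path
    have hnd : (Multigraph.Walk.cons e hv (.nil v)).support.Nodup := by
      simp [Multigraph.Walk.support, htv]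
    have hint : ∀ x ∈ (Multigraph.Walk.cons e hv (.nil v)).support, x ∈ T → x = t ∨ x = v := by
      intro x hx _
      simpa [Multigraph.Walk.support] using hx
    exact ⟨{⟨t, v, .cons e hv (.nil v), ht, hvT, htv, hnd, hint⟩},
      cover _ (by simp [Multigraph.Walk.edges])⟩
  -- v ∉ T: consider the component X of v in H - T
  · set X : Set V := {w | H.ReachableIn Tᶜ v w} with hX
    have hXT : X ⊆ Tᶜ := by
      rintro w ⟨p, hp⟩
      exact hp w p.end_mem_support
    have hvX : v ∈ X := ⟨.nil v, by simpa [Multigraph.Walk.support] using hvT⟩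
    have htX : t ∉ X := fun h => hXT h ht
    have heCut : e ∈ H.cut X := ⟨v, t, by rw [hv]; exact (Sym2.eq_swap), hvX, htX⟩
    -- there is another cut edge f ≠ e
    have hf : ∃ f ∈ H.cut X, f ≠ e := by
      by_contra h
      push_neg at h
      have : H.cut X = {e} := Set.eq_singleton_iff_unique_mem.2 ⟨heCut, h⟩
      exact hEul X hXT (by rw [this]; exact ⟨Set.finite_singleton e, by simp⟩)
    obtain ⟨f, ⟨x, y, hfxy, hxX, hyX⟩, hfe⟩ := hf
    -- the far endpoint y of f is in T
    have hyT : y ∈ T := by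
      by_contra hyT
      apply hyX
      obtain ⟨p, hp⟩ := hxX
      refine ⟨p.append (.cons f hfxy (.nil y)), ?_⟩
      intro z hz
      rw [Multigraph.Walk.support_append] at hz
      simp [Multigraph.Walk.support] at hz
      rcases hz with hz | rfl
      · exact hp z hz
      · exact hyT
    have hyt : y ≠ t := by
      rintro rfl
      exact hfe (hd (show f ∈ H.inci y by rw [Multigraph.inci, Set.mem_setOf_eq, hfxy]; simp) he)
    -- a path from v to x inside H - T
    obtain ⟨p0, hp0⟩ := hxX
    obtain ⟨q, hqnd, hqsub⟩ := p0.exists_nodup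
    have hqT : ∀ z ∈ q.support, z ∉ T := fun z hz => hp0 z (hqsub z hz)
    -- assemble the full walk t -e- v - ... - x -f- y
    set W : H.Walk t y := .cons e hv (q.append (.cons f hfxy (.nil y))) with hW
    have hWsup : W.support = t :: (q.support ++ [y]) := by
      rw [hW]
      simp only [Multigraph.Walk.support]
      rw [Multigraph.Walk.support_append]
      simp [Multigraph.Walk.support]
    have hnd : W.support.Nodup := by
      rw [hWsup]
      refine List.nodup_cons.2 ⟨?_, ?_⟩
      · simp only [List.mem_append, List.mem_singleton]
        rintro (h | rfl)
        · exact hqT t h ht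
        · exact hyt rfl
      · refine List.Nodup.append hqnd (List.nodup_singleton y) ?_
        intro z hz hz'
        simp at hz'
        subst hz'
        exact hqT z hz hyT
    have hint : ∀ z ∈ W.support, z ∈ T → z = t ∨ z = y := by
      intro z hz hzT
      rw [hWsup] at hz
      simp at hz
      rcases hz with rfl | hz | rfl
      · exact Or.inl rfl
      · exact absurd hzT (hqT z hz)
      · exact Or.inr rfl
    exact ⟨{⟨t, y, W, ht, hyT, hyt.symm, hnd, hint⟩},
      cover _ (show e ∈ W.edges by rw [hW]; simp [Multigraph.Walk.edges])⟩
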